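/- arXiv:math/0101145 — 3 statements merged into one kernel-verified Lean document; each statement's English description precedes it below -/
import Mathlib

section
/- Let U ⊆ ℝ² be an open set with coordinates (u,v), let x, y : U → ℝ be C² functions satisfying the Cauchy–Riemann equations ∂_u x − ∂_v y = 0 and ∂_u y + ∂_v x = 0, and let z : U → ℝ be a C² harmonic function (∂²z/∂u² + ∂²z/∂v² = 0 on U). Then the 1-form ω = (∂_v z + x·∂_v y) du + (x·∂_v x − ∂_u z) dv is closed; that is, ∂_v(∂_v z + x·∂_v y) = ∂_u(x·∂_v x − ∂_u z) at every point of U. (This is the content of Lemma 4.15 of the paper: the mixed partials of any local primitive τ of ω agree, so τ can be constructed by the Poincaré lemma.) -/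
/-- Partial derivative with respect to the first coordinate `u`. -/
noncomputable def pdu (f : ℝ × ℝ → ℝ) (p : ℝ × ℝ) : ℝ := fderiv ℝ f p (1, 0)

/-- Partial derivative with respect to the second coordinate `v`. -/
noncomputable def pdv (f : ℝ × ℝ → ℝ) (p : ℝ × ℝ) : ℝ := fderiv ℝ f p (0, 1)

/-!
Substituting the Cauchy–Riemann equation `∂_v y = ∂_u x` (valid on a neighbourhood of the point)
into the first coefficient of `ω`, the product rule gives
`∂_v(∂_v z + x ∂_u x) = ∂_vv z + ∂_v x ∂_u x + x ∂_v ∂_u x` and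
`∂_u(x ∂_v x − ∂_u z) = ∂_u x ∂_v x + x ∂_u ∂_v x − ∂_uu z`.
The middle terms agree by symmetry of second derivatives, and the outer ones by harmonicity of `z`.
-/

open Filter Topology

section SecondDerivative

variable {𝕜 E F : Type*} [NontriviallyNormedField 𝕜] [NormedAddCommGroup E] [NormedSpace 𝕜 E]
  [NormedAddCommGroup F] [NormedSpace 𝕜 F] {f : E → F} {p : E} {n : WithTop ℕ∞}

theorem ContDiffAt.differentiableAt_fderiv (hf : ContDiffAt 𝕜 n f p) (hn : 2 ≤ n) :
    DifferentiableAt 𝕜 (fderiv 𝕜 f) p :=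
  (hf.fderiv_right (m := 1) (by rwa [one_add_one_eq_two])).differentiableAt one_ne_zero

theorem ContDiffAt.differentiableAt_fderiv_apply (hf : ContDiffAt 𝕜 n f p) (hn : 2 ≤ n) (w : E) :
    DifferentiableAt 𝕜 (fun q => fderiv 𝕜 f q w) p :=
  (hf.differentiableAt_fderiv hn).clm_apply (differentiableAt_const w)

theorem ContDiffAt.fderiv_fderiv_apply (hf : ContDiffAt 𝕜 n f p) (hn : 2 ≤ n) (v w : E) :
    fderiv 𝕜 (fun q => fderiv 𝕜 f q w) p v = fderiv 𝕜 (fderiv 𝕜 f) p v w := by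
  rw [fderiv_clm_apply (hf.differentiableAt_fderiv hn) (differentiableAt_const w)]
  simp

theorem ContDiffAt.fderiv_fderiv_apply_comm (hf : ContDiffAt 𝕜 n f p)
    (hn : minSmoothness 𝕜 2 ≤ n) (v w : E) :
    fderiv 𝕜 (fun q => fderiv 𝕜 f q w) p v = fderiv 𝕜 (fun q => fderiv 𝕜 f q v) p w := by
  have h2 : 2 ≤ n := le_minSmoothness.trans hn
  rw [hf.fderiv_fderiv_apply h2, hf.fderiv_fderiv_apply h2]
  exact hf.isSymmSndFDerivAt hn v w

end SecondDerivative

section PartialDerivatives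

variable {f g : ℝ × ℝ → ℝ} {p : ℝ × ℝ}

theorem ContDiffAt.differentiableAt_pdu (hf : ContDiffAt ℝ 2 f p) :
    DifferentiableAt ℝ (pdu f) p :=
  hf.differentiableAt_fderiv_apply le_rfl _

theorem ContDiffAt.differentiableAt_pdv (hf : ContDiffAt ℝ 2 f p) :
    DifferentiableAt ℝ (pdv f) p :=
  hf.differentiableAt_fderiv_apply le_rfl _

theorem pdu_pdv_comm (hf : ContDiffAt ℝ 2 f p) : pdu (pdv f) p = pdv (pdu f) p :=
  hf.fderiv_fderiv_apply_comm (by simp) _ _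

theorem Filter.EventuallyEq.pdv_eq (h : f =ᶠ[𝓝 p] g) : pdv f p = pdv g p := by
  rw [pdv, pdv, h.fderiv_eq]

theorem pdv_add (hf : DifferentiableAt ℝ f p) (hg : DifferentiableAt ℝ g p) :
    pdv (fun q => f q + g q) p = pdv f p + pdv g p := by
  simp [pdv, fderiv_fun_add hf hg]

theorem pdu_sub (hf : DifferentiableAt ℝ f p) (hg : DifferentiableAt ℝ g p) :
    pdu (fun q => f q - g q) p = pdu f p - pdu g p := by
  simp [pdu, fderiv_fun_sub hf hg]

theorem pdu_mul (hf : DifferentiableAt ℝ f p) (hg : DifferentiableAt ℝ g p) :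
    pdu (fun q => f q * g q) p = f p * pdu g p + g p * pdu f p := by
  simp [pdu, fderiv_fun_mul hf hg]

theorem pdv_mul (hf : DifferentiableAt ℝ f p) (hg : DifferentiableAt ℝ g p) :
    pdv (fun q => f q * g q) p = f p * pdv g p + g p * pdv f p := by
  simp [pdv, fderiv_fun_mul hf hg]

end PartialDerivatives

theorem omega_closed_general
    (U : Set (ℝ × ℝ)) (hU : IsOpen U)
    (x y z : ℝ × ℝ → ℝ)
    (hx : ContDiffOn ℝ 2 x U) (hz : ContDiffOn ℝ 2 z U)
    (hCR1 : ∀ p ∈ U, pdu x p - pdv y p = 0)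
    (hharm : ∀ p ∈ U, pdu (pdu z) p + pdv (pdv z) p = 0) :
    ∀ p ∈ U,
      pdv (fun q => pdv z q + x q * pdv y q) p
        = pdu (fun q => x q * pdv x q - pdu z q) p := by
  intro p hp
  have hxp : ContDiffAt ℝ 2 x p := hx.contDiffAt (hU.mem_nhds hp)
  have hzp : ContDiffAt ℝ 2 z p := hz.contDiffAt (hU.mem_nhds hp)
  have hxd : DifferentiableAt ℝ x p := hxp.differentiableAt two_ne_zero
  have hCR : (fun q => pdv z q + x q * pdv y q) =ᶠ[𝓝 p] fun q => pdv z q + x q * pdu x q := by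
    filter_upwards [hU.mem_nhds hp] with q hq
    rw [sub_eq_zero.mp (hCR1 q hq)]
  rw [hCR.pdv_eq, pdv_add hzp.differentiableAt_pdv (hxd.fun_mul hxp.differentiableAt_pdu),
    pdv_mul hxd hxp.differentiableAt_pdu, pdu_sub (hxd.fun_mul hxp.differentiableAt_pdv)
    hzp.differentiableAt_pdu, pdu_mul hxd hxp.differentiableAt_pdv, pdu_pdv_comm hxp]
  linarith [hharm p hp]

/-- **Lemma 4.15**: if `x, y` satisfy the Cauchy–Riemann equations on an open set
`U ⊆ ℝ²` and `z` is harmonic on `U`, then the 1-form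
`ω = (∂_v z + x ∂_v y) du + (x ∂_v x − ∂_u z) dv` is closed, i.e. the mixed partials
of any local primitive `τ` of `ω` agree. -/
theorem omega_closed
    (U : Set (ℝ × ℝ)) (hU : IsOpen U)
    (x y z : ℝ × ℝ → ℝ)
    (hx : ContDiffOn ℝ 2 x U) (hy : ContDiffOn ℝ 2 y U) (hz : ContDiffOn ℝ 2 z U)
    (hCR1 : ∀ p ∈ U, pdu x p - pdv y p = 0)
    (hCR2 : ∀ p ∈ U, pdu y p + pdv x p = 0)
    (hharm : ∀ p ∈ U, pdu (pdu z) p + pdv (pdv z) p = 0) :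
    ∀ p ∈ U,
      pdv (fun q => pdv z q + x q * pdv y q) p
        = pdu (fun q => x q * pdv x q - pdu z q) p :=
  omega_closed_general U hU x y z hx hz hCR1 hharm
end

section
/- Define F : ℝ² → ℝ⁴ by F(u,v) = (x,y,z,τ)(u,v) = (e^{−u}cos v, −e^{−u}sin v, v, u + (1/2)e^{−2u}cos²v). Then: (1) F satisfies the ∂̄_J system (i) ∂_u x − ∂_v y = 0, (ii) ∂_u y + ∂_v x = 0, (iii) ∂_u τ − ∂_v z = x·∂_v y, (iv) ∂_u z + ∂_v τ = x·∂_v x on all of ℝ²; (2) F(u,0) has y-coordinate 0 and positive x-coordinate, and F(u,π/2) has x-coordinate 0 and negative y-coordinate, for every u; (3) as u → ∞, τ(u,v) → +∞ and (x,y)(u,v) → (0,0) uniformly in v, so (x,y,z)(u,v) → (0,0,v) uniformly in v; i.e., F tends asymptotically at +∞ to the Reeb strip over the vertical Reeb chord at the origin. (This is the straight-line local model of equation (4.16) in the paper.) -/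
open Real

/-- The `x`-component of the straight-line model `F(u,v) = e^{-u}cos v`. -/
noncomputable def slX (p : ℝ × ℝ) : ℝ := Real.exp (-p.1) * Real.cos p.2

/-- The `y`-component of the straight-line model `F(u,v) = -e^{-u}sin v`. -/
noncomputable def slY (p : ℝ × ℝ) : ℝ := -(Real.exp (-p.1) * Real.sin p.2)

/-- The `z`-component of the straight-line model `F(u,v) = v`. -/
noncomputable def slZ (p : ℝ × ℝ) : ℝ := p.2

/-- The `τ`-component of the straight-line model
`F(u,v) = u + (1/2)e^{-2u}cos²v`. -/
noncomputable def slT (p : ℝ × ℝ) : ℝ :=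
  p.1 + (1 / 2) * Real.exp (-(2 * p.1)) * (Real.cos p.2) ^ 2

section PartialDerivatives

variable {f : ℝ × ℝ → ℝ} {p : ℝ × ℝ} {a : ℝ}

theorem pdu_eq_of_hasDerivAt (hf : DifferentiableAt ℝ f p)
    (h : HasDerivAt (fun u => f (u, p.2)) a p.1) : pdu f p = a := by
  have hslice : HasDerivAt (fun u => f (u, p.2)) (pdu f p) p.1 :=
    hf.hasFDerivAt.comp_hasDerivAt p.1 ((hasDerivAt_id p.1).prodMk (hasDerivAt_const p.1 p.2))
  exact hslice.unique h

theorem pdv_eq_of_hasDerivAt (hf : DifferentiableAt ℝ f p)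
    (h : HasDerivAt (fun v => f (p.1, v)) a p.2) : pdv f p = a := by
  have hslice : HasDerivAt (fun v => f (p.1, v)) (pdv f p) p.2 :=
    hf.hasFDerivAt.comp_hasDerivAt p.2 ((hasDerivAt_const p.2 p.1).prodMk (hasDerivAt_id p.2))
  exact hslice.unique h

end PartialDerivatives

section StraightLineModel

variable (p : ℝ × ℝ)

theorem slT_eq : slT p = p.1 + slX p ^ 2 / 2 := by
  rw [slT, slX, mul_pow, ← Real.exp_nat_mul]
  ring_nf

theorem differentiableAt_slX : DifferentiableAt ℝ slX p := by
  unfold slX; fun_prop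

theorem differentiableAt_slY : DifferentiableAt ℝ slY p := by
  unfold slY; fun_prop

theorem differentiableAt_slT : DifferentiableAt ℝ slT p := by
  unfold slT; fun_prop

theorem hasDerivAt_slX_u : HasDerivAt (fun u => slX (u, p.2)) (-slX p) p.1 :=
  ((hasDerivAt_neg p.1).exp.mul_const (Real.cos p.2)).congr_deriv (by simp [slX])

theorem hasDerivAt_slX_v : HasDerivAt (fun v => slX (p.1, v)) (slY p) p.2 :=
  ((Real.hasDerivAt_cos p.2).const_mul (Real.exp (-p.1))).congr_deriv (by simp [slY])

theorem pdu_slX : pdu slX p = -slX p :=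
  pdu_eq_of_hasDerivAt (differentiableAt_slX p) (hasDerivAt_slX_u p)

theorem pdv_slX : pdv slX p = slY p :=
  pdv_eq_of_hasDerivAt (differentiableAt_slX p) (hasDerivAt_slX_v p)

theorem pdu_slY : pdu slY p = -slY p :=
  pdu_eq_of_hasDerivAt (differentiableAt_slY p)
    (((hasDerivAt_neg p.1).exp.mul_const (Real.sin p.2)).neg.congr_deriv (by simp [slY]))

theorem pdv_slY : pdv slY p = -slX p :=
  pdv_eq_of_hasDerivAt (differentiableAt_slY p)
    (((Real.hasDerivAt_sin p.2).const_mul (Real.exp (-p.1))).neg.congr_deriv (by simp [slX]))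

theorem pdu_slZ : pdu slZ p = 0 :=
  pdu_eq_of_hasDerivAt differentiableAt_snd (hasDerivAt_const p.1 p.2)

theorem pdv_slZ : pdv slZ p = 1 :=
  pdv_eq_of_hasDerivAt differentiableAt_snd (hasDerivAt_id p.2)

theorem pdu_slT : pdu slT p = 1 - slX p ^ 2 := by
  refine pdu_eq_of_hasDerivAt (differentiableAt_slT p) ?_
  simp only [slT_eq]
  exact ((hasDerivAt_id p.1).add (((hasDerivAt_slX_u p).pow 2).div_const 2)).congr_deriv
    (by ring)

theorem pdv_slT : pdv slT p = slX p * slY p := by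
  refine pdv_eq_of_hasDerivAt (differentiableAt_slT p) ?_
  simp only [slT_eq]
  exact ((hasDerivAt_const p.2 p.1).add (((hasDerivAt_slX_v p).pow 2).div_const 2)).congr_deriv
    (by ring)

theorem abs_slX_le : |slX p| ≤ Real.exp (-p.1) := by
  rw [slX, abs_mul, abs_of_pos (Real.exp_pos _)]
  exact mul_le_of_le_one_right (Real.exp_pos _).le (Real.abs_cos_le_one _)

theorem abs_slY_le : |slY p| ≤ Real.exp (-p.1) := by
  rw [slY, abs_neg, abs_mul, abs_of_pos (Real.exp_pos _)]
  exact mul_le_of_le_one_right (Real.exp_pos _).le (Real.abs_sin_le_one _)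

theorem fst_le_slT : p.1 ≤ slT p := by
  rw [slT_eq]
  linarith [sq_nonneg (slX p)]

end StraightLineModel

/-- **The straight-line local model (equation (4.16))**:
`F(u,v) = (e^{−u}cos v, −e^{−u}sin v, v, u + ½e^{−2u}cos²v)`
(1) satisfies the `∂̄_J` system on all of `ℝ²`;
(2) maps the boundary lines `v = 0` and `v = π/2` of the strip to the positive
`x`-axis and the negative `y`-axis respectively;
(3) tends asymptotically, uniformly in `v ∈ [0, π/2]`, to the Reeb strip over the
vertical Reeb chord at the origin: `τ → +∞` and `(x,y,z) → (0,0,v)` as `u → ∞`. -/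
theorem straight_line_model :
    (∀ p : ℝ × ℝ,
      pdu slX p - pdv slY p = 0 ∧
      pdu slY p + pdv slX p = 0 ∧
      pdu slT p - pdv slZ p = slX p * pdv slY p ∧
      pdu slZ p + pdv slT p = slX p * pdv slX p) ∧
    (∀ u : ℝ,
      slY (u, 0) = 0 ∧ 0 < slX (u, 0) ∧
      slX (u, π / 2) = 0 ∧ slY (u, π / 2) < 0) ∧
    (∀ C : ℝ, ∃ u₀ : ℝ, ∀ u ≥ u₀, ∀ v ∈ Set.Icc 0 (π / 2), C ≤ slT (u, v)) ∧
    (∀ ε > (0 : ℝ), ∃ u₀ : ℝ, ∀ u ≥ u₀, ∀ v ∈ Set.Icc 0 (π / 2),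
      |slX (u, v)| < ε ∧ |slY (u, v)| < ε ∧ |slZ (u, v) - v| < ε) := by
  refine ⟨fun p => ?_, fun u => ?_, fun C => ⟨C, fun u hu v _ => hu.trans (fst_le_slT (u, v))⟩,
    fun ε hε => ?_⟩
  · simp only [pdu_slX, pdv_slX, pdu_slY, pdv_slY, pdu_slZ, pdv_slZ, pdu_slT, pdv_slT]
    refine ⟨?_, ?_, ?_, ?_⟩ <;> ring
  · simp [slX, slY, Real.exp_pos]
  · obtain ⟨u₀, hu₀⟩ := Filter.eventually_atTop.1
      ((tendsto_order.1 Real.tendsto_exp_neg_atTop_nhds_zero).2 ε hε)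
    exact ⟨u₀, fun u hu v _ => ⟨(abs_slX_le (u, v)).trans_lt (hu₀ u hu),
      (abs_slY_le (u, v)).trans_lt (hu₀ u hu), by simpa [slZ]⟩⟩
end

section
/- Let R be a commutative ring, V a type, and d : V → ℤ a degree function, and let A be the free associative unital R-algebra on V, ℤ-graded so that each generator v ∈ V is homogeneous of degree d(v). Let ∂ : A → A be an R-linear map which is homogeneous of degree −1, satisfies ∂² = 0, annihilates R, and satisfies the signed Leibniz rule ∂(ab) = (∂a)b + (−1)^{|a|} a(∂b) for homogeneous a. Fix i ∈ ℤ and let S_i(A) be the free associative unital R-algebra on V together with two new generators e₁ (of degree i) and e₂ (of degree i−1), with the unique degree −1, square-zero, signed-Leibniz differential ∂′ extending ∂ and satisfying ∂′e₁ = e₂, ∂′e₂ = 0. Then the natural inclusion ι : A → S_i(A) is a chain map inducing an isomorphism on homology: ker(∂)/im(∂) ≅ ker(∂′)/im(∂′) as graded R-modules. (Corollary 3.9 of the paper: homology of the DGA is invariant under stabilization.) -/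
/-- The degree of a monomial (a word in the generators), given a degree function `d`
on the generators: the sum of the degrees of its letters. -/
def monomialDegree {V : Type*} (d : V → ℤ) (w : FreeMonoid V) : ℤ :=
  (w.toList.map d).sum

/-- The homogeneous component of degree `n` of the free associative unital
`R`-algebra on `V` (realized as the monoid algebra on the free monoid on `V`),
graded so that a generator `v` has degree `d v`: the `R`-submodule spanned by the
monomials of degree `n`. -/
noncomputable def homogComponent (R : Type*) [CommRing R] {V : Type*} (d : V → ℤ) (n : ℤ) :
    Submodule R (MonoidAlgebra R (FreeMonoid V)) :=
  (Finsupp.supported R R {w : FreeMonoid V | monomialDegree d w = n}).comap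
    (MonoidAlgebra.coeffLinearEquiv R).toLinearMap

/-! `S_i(A)` deformation retracts onto `A`. The algebra map `σ : S_i(A) → A` killing `e₁` and
`e₂` is a left inverse of `ι`, and the `R`-linear map `H` sending a word `a e₂ t`, with `a` a
word in `V`, to `(-1)^|a| a e₁ t` and every other word to `0` satisfies `∂'H + H∂' = 1 - ισ`.
This identity is checked on words by induction, peeling off the first letter with the Leibniz
rule; for a letter `v ∈ V` the two terms involving `∂v` cancel because `|∂v| = |v| - 1`.
Hence `σ` is a chain map, `∂(σ y) = x` whenever `∂' y = ι x`, and every cycle `z` of `S_i(A)`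
differs from `ι(σ z)` by the boundary `∂'(-H z)`. -/

lemma Int.negOnePow_smul_negOnePow_smul {M : Type*} [AddCommGroup M] (n : ℤ) (x : M) :
    (n.negOnePow : ℤ) • (n.negOnePow : ℤ) • x = x := by
  rw [smul_smul, ← Units.val_mul, Int.units_mul_self, Units.val_one, one_smul]

lemma Int.negOnePow_sub_one_smul {M : Type*} [AddCommGroup M] (n : ℤ) (x : M) :
    ((n - 1).negOnePow : ℤ) • x = -((n.negOnePow : ℤ) • x) := by
  rw [Int.negOnePow_sub, Int.negOnePow_one, mul_neg_one, Units.val_neg, neg_smul]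

open MonoidAlgebra

section Grading

variable {R : Type*} [CommRing R] {V : Type*} (d : V → ℤ)

@[simp]
lemma monomialDegree_one : monomialDegree d 1 = 0 := rfl

@[simp]
lemma monomialDegree_of (x : V) : monomialDegree d (FreeMonoid.of x) = d x := by
  simp [monomialDegree]

@[simp]
lemma monomialDegree_mul (w w' : FreeMonoid V) :
    monomialDegree d (w * w') = monomialDegree d w + monomialDegree d w' := by
  simp [monomialDegree]

lemma homogComponent_eq_span (n : ℤ) :
    homogComponent R d n =
      Submodule.span R ((single · 1) '' {w : FreeMonoid V | monomialDegree d w = n}) :=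
  supported_eq_span_single ..

lemma single_mem_homogComponent (w : FreeMonoid V) (r : R) :
    single w r ∈ homogComponent R d (monomialDegree d w) :=
  Finsupp.single_mem_supported R r rfl

instance homogComponent.gradedMonoid : SetLike.GradedMonoid (homogComponent R d) where
  one_mem := single_mem_homogComponent d 1 1
  mul_mem m n a b ha hb := by
    have hmul : homogComponent R d m * homogComponent R d n ≤ homogComponent R d (m + n) := by
      rw [homogComponent_eq_span, homogComponent_eq_span, Submodule.span_mul_span,
        Submodule.span_le]
      rintro _ ⟨_, ⟨w, rfl, rfl⟩, _, ⟨w', rfl, rfl⟩, rfl⟩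
      simpa [single_mul_single] using single_mem_homogComponent d (w * w') (1 : R)
    exact hmul (Submodule.mul_mem_mul ha hb)

lemma FreeMonoid.hom_mem_homogComponent {W : Type*} (e : W → ℤ)
    (f : FreeMonoid W →* MonoidAlgebra R (FreeMonoid V))
    (hf : ∀ x, f (FreeMonoid.of x) ∈ homogComponent R d (e x)) (w : FreeMonoid W) :
    f w ∈ homogComponent R d (monomialDegree e w) := by
  induction w using FreeMonoid.inductionOn' with
  | one => simpa using SetLike.GradedOne.one_mem
  | of_mul x w ih => simpa using SetLike.mul_mem_graded (hf x) ih

lemma lift_mem_homogComponent {W : Type*} (e : W → ℤ)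
    (f : FreeMonoid W →* MonoidAlgebra R (FreeMonoid V))
    (hf : ∀ x, f (FreeMonoid.of x) ∈ homogComponent R d (e x)) {n : ℤ}
    {z : MonoidAlgebra R (FreeMonoid W)} (hz : z ∈ homogComponent R e n) :
    lift R _ _ f z ∈ homogComponent R d n := by
  suffices homogComponent R e n ≤ (homogComponent R d n).comap (lift R _ _ f).toLinearMap from
    this hz
  rw [homogComponent_eq_span, Submodule.span_le]
  rintro _ ⟨w, rfl, rfl⟩
  simpa using FreeMonoid.hom_mem_homogComponent d e f hf w

end Grading

structure IsDeformationRetract {M N : Type*} [AddCommGroup M] [AddCommGroup N]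
    (D : M →+ M) (D' : N →+ N) (ι : M →+ N) (σ : N →+ M) (H : N →+ N) : Prop where
  leftInverse : Function.LeftInverse σ ι
  comm : ∀ a, D' (ι a) = ι (D a)
  homotopy : ∀ z, D' (H z) + H (D' z) = z - ι (σ z)

namespace IsDeformationRetract

variable {M N : Type*} [AddCommGroup M] [AddCommGroup N]
  {D : M →+ M} {D' : N →+ N} {ι : M →+ N} {σ : N →+ M} {H : N →+ N}

lemma retraction_comm (h : IsDeformationRetract D D' ι σ H) (hD' : ∀ z, D' (D' z) = 0)
    (z : N) : σ (D' z) = D (σ z) := by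
  have hισ (z : N) : ι (σ z) = z - (D' (H z) + H (D' z)) := by rw [h.homotopy, sub_sub_cancel]
  apply h.leftInverse.injective
  rw [← h.comm, hισ, hισ, map_sub, map_add, hD', hD', map_zero, add_zero, zero_add]

lemma exists_eq_of_inclusion_mem_range (h : IsDeformationRetract D D' ι σ H)
    (hD' : ∀ z, D' (D' z) = 0) {x : M} (hx : ∃ y, D' y = ι x) : ∃ z, D z = x := by
  obtain ⟨y, hy⟩ := hx
  exact ⟨σ y, by rw [← h.retraction_comm hD', hy, h.leftInverse]⟩

lemma differential_retraction_eq_zero_of_cycle (h : IsDeformationRetract D D' ι σ H) (hD' : ∀ z, D' (D' z) = 0)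
    {z : N} (hz : D' z = 0) : D (σ z) = 0 := by
  rw [← h.retraction_comm hD', hz, map_zero]

lemma differential_neg_homotopy_of_cycle (h : IsDeformationRetract D D' ι σ H) {z : N}
    (hz : D' z = 0) : D' (-H z) = ι (σ z) - z := by
  rw [map_neg, eq_sub_of_add_eq (h.homotopy z), hz, map_zero, sub_zero, neg_sub]

end IsDeformationRetract

namespace Stabilization

variable {R : Type*} [CommRing R] {V : Type*}

variable (R V) in
noncomputable def inclusion :
    MonoidAlgebra R (FreeMonoid V) →ₐ[R] MonoidAlgebra R (FreeMonoid (V ⊕ Fin 2)) :=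
  lift R _ (FreeMonoid V) (FreeMonoid.lift fun v => single (FreeMonoid.of (Sum.inl v)) 1)

variable (R V) in
noncomputable def retraction :
    MonoidAlgebra R (FreeMonoid (V ⊕ Fin 2)) →ₐ[R] MonoidAlgebra R (FreeMonoid V) :=
  lift R _ _ (FreeMonoid.lift (Sum.elim (fun v => single (FreeMonoid.of v) 1) 0))

lemma inclusion_single (w : FreeMonoid V) (r : R) :
    inclusion R V (single w r) = single (FreeMonoid.map Sum.inl w) r := by
  have hlift : (FreeMonoid.lift fun v => single (FreeMonoid.of (Sum.inl v)) (1 : R)) =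
      (MonoidAlgebra.of R _).comp (FreeMonoid.map (Sum.inl : V → V ⊕ Fin 2)) :=
    FreeMonoid.hom_eq fun _ => rfl
  simp [inclusion, lift_single, hlift]

lemma retraction_inclusion (a : MonoidAlgebra R (FreeMonoid V)) :
    retraction R V (inclusion R V a) = a := by
  have hlift : (FreeMonoid.lift (Sum.elim (fun v => single (FreeMonoid.of v) (1 : R)) 0)).comp
      (FreeMonoid.map (Sum.inl : V → V ⊕ Fin 2)) = MonoidAlgebra.of R _ :=
    FreeMonoid.hom_eq fun _ => rfl
  induction a using MonoidAlgebra.induction_linear with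
  | zero => simp
  | add a b ha hb => rw [map_add, map_add, ha, hb]
  | single w r =>
    rw [inclusion_single, retraction, lift_single, ← MonoidHom.comp_apply, hlift, of_apply,
      smul_single', mul_one]

lemma retraction_single_inr_mul (j : Fin 2) (u : MonoidAlgebra R (FreeMonoid (V ⊕ Fin 2))) :
    retraction R V (single (FreeMonoid.of (Sum.inr j)) 1 * u) = 0 := by
  simp [retraction, lift_single]

lemma retraction_mem_homogComponent (d : V → ℤ) (d' : V ⊕ Fin 2 → ℤ)
    (hd' : ∀ v, d' (Sum.inl v) = d v) {n : ℤ} {z : MonoidAlgebra R (FreeMonoid (V ⊕ Fin 2))}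
    (hz : z ∈ homogComponent R d' n) : retraction R V z ∈ homogComponent R d n := by
  refine lift_mem_homogComponent d d' _ (fun x => ?_) hz
  rcases x with v | j
  · simpa [hd'] using single_mem_homogComponent d (FreeMonoid.of v) (1 : R)
  · exact Submodule.zero_mem _

section Homotopy

variable (R) in
noncomputable def homotopyWord (d : V → ℤ) :
    List (V ⊕ Fin 2) → MonoidAlgebra R (FreeMonoid (V ⊕ Fin 2))
  | [] => 0
  | Sum.inl v :: t =>
    (Int.negOnePow (d v) : ℤ) • (single (FreeMonoid.of (Sum.inl v)) 1 * homotopyWord d t)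
  | Sum.inr j :: t =>
    if j = 1 then single (FreeMonoid.of (Sum.inr 0) * FreeMonoid.ofList t) 1 else 0

variable (R) in
noncomputable def homotopy (d : V → ℤ) :
    MonoidAlgebra R (FreeMonoid (V ⊕ Fin 2)) →ₗ[R] MonoidAlgebra R (FreeMonoid (V ⊕ Fin 2)) :=
  (MonoidAlgebra.basis _ R).constr R fun w => homotopyWord R d w.toList

variable (d : V → ℤ)

lemma homotopy_single (w : FreeMonoid (V ⊕ Fin 2)) (r : R) :
    homotopy R d (single w r) = r • homotopyWord R d w.toList := by
  rw [← mul_one r, ← smul_single', map_smul, homotopy, ← basis_apply, Module.Basis.constr_basis,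
    mul_one]

lemma homotopy_one : homotopy R d 1 = 0 := by
  rw [one_def, homotopy_single, FreeMonoid.toList_one, homotopyWord, smul_zero]

lemma homotopyWord_map_inl_append (w : FreeMonoid V) (t : List (V ⊕ Fin 2)) :
    homotopyWord R d ((FreeMonoid.map Sum.inl w).toList ++ t) =
      (Int.negOnePow (monomialDegree d w) : ℤ) •
        (single (FreeMonoid.map Sum.inl w) 1 * homotopyWord R d t) := by
  induction w using FreeMonoid.inductionOn' with
  | one => simp [← one_def]
  | of_mul v w ih =>
    have hcons : (FreeMonoid.map Sum.inl (FreeMonoid.of v * w)).toList ++ t =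
        Sum.inl v :: ((FreeMonoid.map Sum.inl w).toList ++ t) := rfl
    rw [hcons, homotopyWord, ih, map_mul, FreeMonoid.map_of, monomialDegree_mul,
      monomialDegree_of, Int.negOnePow_add, Units.val_mul, mul_smul, mul_smul_comm, ← mul_assoc,
      single_mul_single, one_mul]

lemma homotopy_inclusion_mul {m : ℤ} {a : MonoidAlgebra R (FreeMonoid V)}
    (ha : a ∈ homogComponent R d m) (u : MonoidAlgebra R (FreeMonoid (V ⊕ Fin 2))) :
    homotopy R d (inclusion R V a * u) =
      (Int.negOnePow m : ℤ) • (inclusion R V a * homotopy R d u) := by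
  rw [homogComponent_eq_span] at ha
  induction ha using Submodule.span_induction with
  | mem _ hw =>
    obtain ⟨w, rfl, rfl⟩ := hw
    induction u using MonoidAlgebra.induction_linear with
    | zero => simp
    | add u u' hu hu' => simp only [mul_add, map_add, hu, hu', smul_add]
    | single w' r =>
      rw [inclusion_single, single_mul_single, homotopy_single, homotopy_single, one_mul,
        FreeMonoid.toList_mul, homotopyWord_map_inl_append, mul_smul_comm, smul_comm]
  | zero => simp
  | add a b _ _ ha hb => simp only [map_add, add_mul, ha, hb, smul_add]
  | smul r a _ ha => simp only [map_smul, smul_mul_assoc, ha, smul_comm r]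

lemma homotopy_e₁_mul (u : MonoidAlgebra R (FreeMonoid (V ⊕ Fin 2))) :
    homotopy R d (single (FreeMonoid.of (Sum.inr 0)) 1 * u) = 0 := by
  induction u using MonoidAlgebra.induction_linear with
  | zero => simp
  | add u u' hu hu' => rw [mul_add, map_add, hu, hu', add_zero]
  | single w r => simp [single_mul_single, homotopy_single, homotopyWord]

lemma homotopy_e₂_mul (u : MonoidAlgebra R (FreeMonoid (V ⊕ Fin 2))) :
    homotopy R d (single (FreeMonoid.of (Sum.inr 1)) 1 * u) =
      single (FreeMonoid.of (Sum.inr 0)) 1 * u := by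
  induction u using MonoidAlgebra.induction_linear with
  | zero => simp
  | add u u' hu hu' => rw [mul_add, map_add, hu, hu', mul_add]
  | single w r => simp [single_mul_single, homotopy_single, homotopyWord]

end Homotopy

section HomotopyFormula

variable {d : V → ℤ} {d' : V ⊕ Fin 2 → ℤ}
  {D : MonoidAlgebra R (FreeMonoid V) →ₗ[R] MonoidAlgebra R (FreeMonoid V)}
  {D' : MonoidAlgebra R (FreeMonoid (V ⊕ Fin 2)) →ₗ[R] MonoidAlgebra R (FreeMonoid (V ⊕ Fin 2))}

lemma differential_homotopy_add_inl_mul (hd'_inl : ∀ v, d' (Sum.inl v) = d v)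
    (hDdeg : ∀ n : ℤ, ∀ a ∈ homogComponent R d n, D a ∈ homogComponent R d (n - 1))
    (hleib : ∀ x u, D' (single (FreeMonoid.of x) 1 * u) = D' (single (FreeMonoid.of x) 1) * u +
      ((d' x).negOnePow : ℤ) • (single (FreeMonoid.of x) 1 * D' u))
    (hext : ∀ a, D' (inclusion R V a) = inclusion R V (D a)) (v : V)
    {u : MonoidAlgebra R (FreeMonoid (V ⊕ Fin 2))}
    (hu : D' (homotopy R d u) + homotopy R d (D' u) = u - inclusion R V (retraction R V u)) :
    let g := single (FreeMonoid.of (Sum.inl v)) 1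
    D' (homotopy R d (g * u)) + homotopy R d (D' (g * u)) =
      g * u - inclusion R V (retraction R V (g * u)) := by
  intro g
  set a : MonoidAlgebra R (FreeMonoid V) := single (FreeMonoid.of v) 1
  set s : ℤ := ((d v).negOnePow : ℤ)
  have ha : a ∈ homogComponent R d (d v) := by
    simpa using single_mem_homogComponent d (FreeMonoid.of v) (1 : R)
  have hg : g = inclusion R V a := by rw [inclusion_single, FreeMonoid.map_of]
  have hDg : D' g = inclusion R V (D a) := by rw [hg, hext]
  have hHg (u) : homotopy R d (g * u) = s • (g * homotopy R d u) := by
    rw [hg]; exact homotopy_inclusion_mul d ha u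
  have hHDa (u) : homotopy R d (inclusion R V (D a) * u) =
      -(s • (inclusion R V (D a) * homotopy R d u)) := by
    rw [homotopy_inclusion_mul d (hDdeg _ _ ha), Int.negOnePow_sub_one_smul]
  have hσg : inclusion R V (retraction R V (g * u)) = g * inclusion R V (retraction R V u) := by
    rw [map_mul, map_mul, hg, retraction_inclusion]
  rw [hHg, map_zsmul, hleib, hleib, hDg, map_add, map_zsmul, hHDa, hHg, hσg, hd'_inl, smul_add,
    Int.negOnePow_smul_negOnePow_smul, Int.negOnePow_smul_negOnePow_smul, ← mul_sub, ← hu,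
    mul_add]
  abel

lemma differential_homotopy_add_inr_mul (hd'_e₂ : d' (Sum.inr 1) = d' (Sum.inr 0) - 1)
    (hleib : ∀ x u, D' (single (FreeMonoid.of x) 1 * u) = D' (single (FreeMonoid.of x) 1) * u +
      ((d' x).negOnePow : ℤ) • (single (FreeMonoid.of x) 1 * D' u))
    (he₁ : D' (single (FreeMonoid.of (Sum.inr 0 : V ⊕ Fin 2)) (1 : R))
      = single (FreeMonoid.of (Sum.inr 1 : V ⊕ Fin 2)) (1 : R))
    (he₂ : D' (single (FreeMonoid.of (Sum.inr 1 : V ⊕ Fin 2)) (1 : R)) = 0) (j : Fin 2)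
    (u : MonoidAlgebra R (FreeMonoid (V ⊕ Fin 2))) :
    let g := single (FreeMonoid.of (Sum.inr j)) 1
    D' (homotopy R d (g * u)) + homotopy R d (D' (g * u)) =
      g * u - inclusion R V (retraction R V (g * u)) := by
  intro g
  rw [retraction_single_inr_mul, map_zero, sub_zero]
  obtain rfl | rfl : j = 0 ∨ j = 1 := by omega
  · rw [homotopy_e₁_mul, map_zero, zero_add, hleib, he₁, map_add, map_zsmul, homotopy_e₂_mul,
      homotopy_e₁_mul, smul_zero, add_zero]
  · rw [homotopy_e₂_mul, hleib, hleib, he₁, he₂, zero_mul, zero_add, map_zsmul, homotopy_e₂_mul,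
      hd'_e₂, Int.negOnePow_sub_one_smul, add_neg_cancel_right]

lemma differential_homotopy_add (hd'_inl : ∀ v, d' (Sum.inl v) = d v)
    (hd'_e₂ : d' (Sum.inr 1) = d' (Sum.inr 0) - 1)
    (hDdeg : ∀ n : ℤ, ∀ a ∈ homogComponent R d n, D a ∈ homogComponent R d (n - 1))
    (hD'leib : ∀ n : ℤ, ∀ a ∈ homogComponent R d' n, ∀ b,
      D' (a * b) = D' a * b + (Int.negOnePow n : ℤ) • (a * D' b))
    (hD'one : D' 1 = 0) (hext : ∀ a, D' (inclusion R V a) = inclusion R V (D a))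
    (he₁ : D' (single (FreeMonoid.of (Sum.inr 0 : V ⊕ Fin 2)) (1 : R))
      = single (FreeMonoid.of (Sum.inr 1 : V ⊕ Fin 2)) (1 : R))
    (he₂ : D' (single (FreeMonoid.of (Sum.inr 1 : V ⊕ Fin 2)) (1 : R)) = 0)
    (z : MonoidAlgebra R (FreeMonoid (V ⊕ Fin 2))) :
    D' (homotopy R d z) + homotopy R d (D' z) = z - inclusion R V (retraction R V z) := by
  have hleib (x : V ⊕ Fin 2) (u : MonoidAlgebra R (FreeMonoid (V ⊕ Fin 2))) :
      D' (single (FreeMonoid.of x) 1 * u) = D' (single (FreeMonoid.of x) 1) * u +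
        ((d' x).negOnePow : ℤ) • (single (FreeMonoid.of x) 1 * D' u) :=
    hD'leib _ _ (by simpa using single_mem_homogComponent d' (FreeMonoid.of x) (1 : R)) u
  have hword (w : FreeMonoid (V ⊕ Fin 2)) :
      D' (homotopy R d (single w 1)) + homotopy R d (D' (single w 1)) =
        single w 1 - inclusion R V (retraction R V (single w 1)) := by
    induction w using FreeMonoid.inductionOn' with
    | one => rw [← one_def, homotopy_one, hD'one, map_zero, map_one, map_one, map_zero, add_zero,
        sub_self]
    | of_mul x w ih =>
      rw [← one_mul (1 : R), ← single_mul_single]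
      rcases x with v | j
      · exact differential_homotopy_add_inl_mul hd'_inl hDdeg hleib hext v ih
      · exact differential_homotopy_add_inr_mul hd'_e₂ hleib he₁ he₂ j _
  induction z using MonoidAlgebra.induction_linear with
  | zero => simp
  | add f g hf hg =>
    simp only [map_add]
    rw [add_add_add_comm, hf, hg]
    abel
  | single w r =>
    rw [← mul_one r, ← smul_single']
    simp only [map_smul]
    rw [← smul_add, hword, smul_sub]

end HomotopyFormula

end Stabilization

theorem stabilization_homology_iso_general
    (R : Type*) [CommRing R] (V : Type*) (d : V → ℤ) (i : ℤ)
    (d' : V ⊕ Fin 2 → ℤ)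
    (hd' : d' = Sum.elim d fun j => if j = 0 then i else i - 1)
    (ι : MonoidAlgebra R (FreeMonoid V) →ₐ[R] MonoidAlgebra R (FreeMonoid (V ⊕ Fin 2)))
    (hι : ι = MonoidAlgebra.lift R _ (FreeMonoid V)
      (FreeMonoid.lift fun v =>
        MonoidAlgebra.single (FreeMonoid.of (Sum.inl v)) (1 : R)))
    (D : MonoidAlgebra R (FreeMonoid V) →ₗ[R] MonoidAlgebra R (FreeMonoid V))
    (D' : MonoidAlgebra R (FreeMonoid (V ⊕ Fin 2)) →ₗ[R]
      MonoidAlgebra R (FreeMonoid (V ⊕ Fin 2)))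
    -- `D` is a degree `−1`, square-zero, signed-Leibniz differential annihilating `R`
    (hDdeg : ∀ n : ℤ, ∀ a ∈ homogComponent R d n, D a ∈ homogComponent R d (n - 1))
    -- `D'` is likewise a degree `−1`, square-zero, signed-Leibniz differential
    (hD'sq : ∀ a, D' (D' a) = 0)
    (hD'ann : ∀ r : R,
      D' (algebraMap R (MonoidAlgebra R (FreeMonoid (V ⊕ Fin 2))) r) = 0)
    (hD'leib : ∀ n : ℤ, ∀ a ∈ homogComponent R d' n, ∀ b,
      D' (a * b) = D' a * b + (Int.negOnePow n : ℤ) • (a * D' b))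
    -- `D'` extends `D` and satisfies `D' e₁ = e₂`, `D' e₂ = 0`
    (hext : ∀ a, D' (ι a) = ι (D a))
    (he₁ : D' (MonoidAlgebra.single (FreeMonoid.of (Sum.inr 0 : V ⊕ Fin 2)) (1 : R))
      = MonoidAlgebra.single (FreeMonoid.of (Sum.inr 1 : V ⊕ Fin 2)) (1 : R))
    (he₂ : D' (MonoidAlgebra.single (FreeMonoid.of (Sum.inr 1 : V ⊕ Fin 2)) (1 : R))
      = 0) :
    -- `ι` is a chain map ...
    (∀ a, D' (ι a) = ι (D a)) ∧
    -- ... inducing an isomorphism on homology, as graded `R`-modules: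
    ∀ n : ℤ,
      -- injectivity on degree-`n` homology classes
      (∀ x ∈ homogComponent R d n, D x = 0 →
        (∃ y, D' y = ι x) → ∃ z, D z = x) ∧
      -- surjectivity onto degree-`n` homology classes
      (∀ x' ∈ homogComponent R d' n, D' x' = 0 →
        ∃ x ∈ homogComponent R d n, D x = 0 ∧ ∃ y, D' y = ι x - x') := by
  subst hd' hι
  have h : IsDeformationRetract D.toAddMonoidHom D'.toAddMonoidHom
      (Stabilization.inclusion R V : _ →+ _) (Stabilization.retraction R V : _ →+ _)
      (Stabilization.homotopy R d).toAddMonoidHom :=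
    ⟨Stabilization.retraction_inclusion, hext,
      Stabilization.differential_homotopy_add (fun _ => rfl) (by simp) hDdeg hD'leib
        (by simpa [one_def] using hD'ann 1) hext he₁ he₂⟩
  refine ⟨hext, fun n => ⟨fun x _ _ hx => h.exists_eq_of_inclusion_mem_range hD'sq hx,
    fun x' hx' hcycle => ?_⟩⟩
  exact ⟨_, Stabilization.retraction_mem_homogComponent d _ (fun _ => rfl) hx',
    h.differential_retraction_eq_zero_of_cycle hD'sq hcycle, _, h.differential_neg_homotopy_of_cycle hcycle⟩

/-- **Corollary 3.9**: the homology of a free differential graded algebra is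
invariant under stabilization.  Here `A` is the free associative unital `R`-algebra
on `V` with generators graded by `d`, `D` is a degree `−1`, square-zero,
`R`-annihilating, signed-Leibniz differential on `A`, and `S_i(A)` is the free
algebra on `V ⊕ Fin 2` (adjoining `e₁ = inr 0` of degree `i` and `e₂ = inr 1` of
degree `i − 1`) with differential `D'` extending `D` via the natural inclusion `ι`
and satisfying `D' e₁ = e₂`, `D' e₂ = 0`.  Then `ι` is a chain map inducing an
isomorphism on homology `ker D / im D ≅ ker D' / im D'` as graded `R`-modules,
expressed degreewise: `ι` is injective and surjective on homology classes of each
degree `n`. -/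
theorem stabilization_homology_iso
    (R : Type*) [CommRing R] (V : Type*) (d : V → ℤ) (i : ℤ)
    (d' : V ⊕ Fin 2 → ℤ)
    (hd' : d' = Sum.elim d fun j => if j = 0 then i else i - 1)
    (ι : MonoidAlgebra R (FreeMonoid V) →ₐ[R] MonoidAlgebra R (FreeMonoid (V ⊕ Fin 2)))
    (hι : ι = MonoidAlgebra.lift R _ (FreeMonoid V)
      (FreeMonoid.lift fun v =>
        MonoidAlgebra.single (FreeMonoid.of (Sum.inl v)) (1 : R)))
    (D : MonoidAlgebra R (FreeMonoid V) →ₗ[R] MonoidAlgebra R (FreeMonoid V))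
    (D' : MonoidAlgebra R (FreeMonoid (V ⊕ Fin 2)) →ₗ[R]
      MonoidAlgebra R (FreeMonoid (V ⊕ Fin 2)))
    -- `D` is a degree `−1`, square-zero, signed-Leibniz differential annihilating `R`
    (hDdeg : ∀ n : ℤ, ∀ a ∈ homogComponent R d n, D a ∈ homogComponent R d (n - 1))
    (hDsq : ∀ a, D (D a) = 0)
    (hDann : ∀ r : R, D (algebraMap R (MonoidAlgebra R (FreeMonoid V)) r) = 0)
    (hDleib : ∀ n : ℤ, ∀ a ∈ homogComponent R d n, ∀ b,
      D (a * b) = D a * b + (Int.negOnePow n : ℤ) • (a * D b))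
    -- `D'` is likewise a degree `−1`, square-zero, signed-Leibniz differential
    (hD'deg : ∀ n : ℤ, ∀ a ∈ homogComponent R d' n, D' a ∈ homogComponent R d' (n - 1))
    (hD'sq : ∀ a, D' (D' a) = 0)
    (hD'ann : ∀ r : R,
      D' (algebraMap R (MonoidAlgebra R (FreeMonoid (V ⊕ Fin 2))) r) = 0)
    (hD'leib : ∀ n : ℤ, ∀ a ∈ homogComponent R d' n, ∀ b,
      D' (a * b) = D' a * b + (Int.negOnePow n : ℤ) • (a * D' b))
    -- `D'` extends `D` and satisfies `D' e₁ = e₂`, `D' e₂ = 0`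
    (hext : ∀ a, D' (ι a) = ι (D a))
    (he₁ : D' (MonoidAlgebra.single (FreeMonoid.of (Sum.inr 0 : V ⊕ Fin 2)) (1 : R))
      = MonoidAlgebra.single (FreeMonoid.of (Sum.inr 1 : V ⊕ Fin 2)) (1 : R))
    (he₂ : D' (MonoidAlgebra.single (FreeMonoid.of (Sum.inr 1 : V ⊕ Fin 2)) (1 : R))
      = 0) :
    -- `ι` is a chain map ...
    (∀ a, D' (ι a) = ι (D a)) ∧
    -- ... inducing an isomorphism on homology, as graded `R`-modules:
    ∀ n : ℤ,
      -- injectivity on degree-`n` homology classes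
      (∀ x ∈ homogComponent R d n, D x = 0 →
        (∃ y, D' y = ι x) → ∃ z, D z = x) ∧
      -- surjectivity onto degree-`n` homology classes
      (∀ x' ∈ homogComponent R d' n, D' x' = 0 →
        ∃ x ∈ homogComponent R d n, D x = 0 ∧ ∃ y, D' y = ι x - x') :=
  stabilization_homology_iso_general R V d i d' hd' ι hι D D' hDdeg hD'sq hD'ann hD'leib hext he₁
    he₂
end
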